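/- For each i = 1,…,r: the vector ν_i has nonnegative entries summing to 1 (it is a probability distribution on {0,…,r}); π*_i = ρ_i π*_{i−1} + (1−ρ_i) ν_i; and ν_i P* = γ_i ν_i + (1−γ_i) π*_{i−1}. -/

import Mathlib

open Matrix

/-- `ρ_i = (1−γ_i)/(1−λ_i)`. -/
noncomputable def rho (γ lam : ℕ → ℝ) (i : ℕ) : ℝ := (1 - γ i) / (1 - lam i)

/-- The row vector `π*_k ∈ ℝ^{r+1}`. -/
noncomputable def pistar (γ lam : ℕ → ℝ) (k i : ℕ) : ℝ :=
  if i = 0 then ∏ j ∈ Finset.Icc 1 k, rho γ lam j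
  else if i ≤ k then
    (1 - rho γ lam i) *
      ∏ j ∈ (Finset.Icc 1 k).erase i, ((1 - γ j - rho γ lam j * (1 - γ i)) / (γ i - γ j))
  else 0

/-- The star-chain transition matrix `P*`. -/
noncomputable def Pstar (r : ℕ) (γ lam : ℕ → ℝ) : Matrix (Fin (r + 1)) (Fin (r + 1)) ℝ :=
  Matrix.of fun i j =>
    if i.val = 0 then
      (if j.val = 0 then
        1 - (∑ l ∈ Finset.Icc 1 r, (1 - γ l) * pistar γ lam r l) / pistar γ lam r 0
      else (1 - γ j.val) * pistar γ lam r j.val / pistar γ lam r 0)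
    else if j = i then γ i.val
    else if j.val = 0 then 1 - γ i.val
    else 0

/-- The row vector `ν_i ∈ ℝ^{r+1}`: `ν_i(j) = (1−γ_i) π*_i(j) / (1−γ_i−ρ_i(1−γ_j))` for
`1 ≤ j ≤ i`, and `ν_i(j) = 0` for `j = 0` and for `j > i`. -/
noncomputable def nuvec (γ lam : ℕ → ℝ) (i j : ℕ) : ℝ :=
  if 1 ≤ j ∧ j ≤ i then (1 - γ i) * pistar γ lam i j / (1 - γ i - rho γ lam i * (1 - γ j))
  else 0

/-!
With `1 - γ_l - ρ_l (1 - γ_i) = ρ_l (γ_i - λ_l)`, the weight `π*_{k+1}(j)` for `j ≤ k` is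
`π*_k(j)` times the single extra factor of index `k + 1`. This expresses `ν_{k+1}(j)` through
`π*_k(j)` and gives both the decomposition of `π*_{k+1}` and the identity
`(γ_j - γ_{k+1}) ν_{k+1}(j) = (1 - γ_{k+1}) π*_k(j)` for `j ≥ 1`, which is column `j` of
`ν_{k+1} P*`. Everything else (the total mass of `ν_{k+1}`, column `0`) follows once each `π*_k`
has total mass `1`, and that is Lagrange interpolation of the monic polynomial `∏_{l ≤ k} (X - λ_l)`
at the nodes `1, γ_1, …, γ_k`. The interlacing makes every factor `(γ_i - λ_l) / (γ_i - γ_l)`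
positive, hence `ν_i ≥ 0`.
-/
open Finset

section Algebra

variable {γ lam : ℕ → ℝ}

lemma one_sub_sub_rho_mul {l : ℕ} (hl : lam l ≠ 1) (x : ℝ) :
    1 - γ l - rho γ lam l * (1 - x) = rho γ lam l * (x - lam l) := by
  have : 1 - lam l ≠ 0 := sub_ne_zero.mpr hl.symm
  rw [rho]
  field_simp
  ring

lemma pistar_apply_zero (k : ℕ) : pistar γ lam k 0 = ∏ j ∈ Icc 1 k, rho γ lam j := rfl

lemma pistar_of_pos_of_le {k i : ℕ} (hi : 1 ≤ i) (hik : i ≤ k) :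
    pistar γ lam k i = (1 - rho γ lam i) *
      ∏ j ∈ (Icc 1 k).erase i, ((1 - γ j - rho γ lam j * (1 - γ i)) / (γ i - γ j)) := by
  rw [pistar, if_neg (by omega), if_pos hik]

lemma pistar_of_lt {k i : ℕ} (h : k < i) : pistar γ lam k i = 0 := by
  rw [pistar, if_neg (by omega), if_neg (by omega)]

lemma pistar_succ_apply_zero (k : ℕ) :
    pistar γ lam (k + 1) 0 = rho γ lam (k + 1) * pistar γ lam k 0 := by
  rw [pistar_apply_zero, pistar_apply_zero, prod_Icc_succ_top (by omega), mul_comm]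

lemma pistar_succ_of_pos_of_le {k j : ℕ} (hj : 1 ≤ j) (hjk : j ≤ k) :
    pistar γ lam (k + 1) j = pistar γ lam k j *
      ((1 - γ (k + 1) - rho γ lam (k + 1) * (1 - γ j)) / (γ j - γ (k + 1))) := by
  have hsplit : (Icc 1 (k + 1)).erase j = insert (k + 1) ((Icc 1 k).erase j) := by
    ext x
    simp only [mem_erase, mem_Icc, mem_insert]
    omega
  rw [pistar_of_pos_of_le hj (by omega), pistar_of_pos_of_le hj hjk, hsplit,
    prod_insert (by simp)]
  ring

lemma one_sub_gamma_mul_pistar {k i : ℕ} (hlam : ∀ l ∈ Icc 1 k, lam l ≠ 1) (hi : 1 ≤ i)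
    (hik : i ≤ k) :
    (1 - γ i) * pistar γ lam k i = pistar γ lam k 0 *
      (∏ l ∈ Icc 1 k, (γ i - lam l)) / ∏ l ∈ (Icc 1 k).erase i, (γ i - γ l) := by
  have hmem : i ∈ Icc 1 k := mem_Icc.mpr ⟨hi, hik⟩
  have hfactor : ∀ l ∈ (Icc 1 k).erase i, 1 - γ l - rho γ lam l * (1 - γ i)
      = rho γ lam l * (γ i - lam l) :=
    fun l hl => one_sub_sub_rho_mul (hlam l (mem_of_mem_erase hl)) _
  have hself : (1 - γ i) * (1 - rho γ lam i) = rho γ lam i * (γ i - lam i) := by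
    rw [← one_sub_sub_rho_mul (hlam i hmem)]
    ring
  rw [pistar_of_pos_of_le hi hik, pistar_apply_zero, prod_div_distrib, prod_congr rfl hfactor,
    prod_mul_distrib, ← mul_prod_erase _ _ hmem, ← mul_prod_erase _ (fun l => γ i - lam l) hmem,
    ← mul_assoc, hself]
  ring

lemma inv_pistar_apply_zero (k : ℕ) :
    (pistar γ lam k 0)⁻¹ = (∏ l ∈ Icc 1 k, (1 - lam l)) / ∏ l ∈ Icc 1 k, (1 - γ l) := by
  rw [pistar_apply_zero, ← prod_inv_distrib, ← prod_div_distrib]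
  exact prod_congr rfl fun l _ => by rw [rho, inv_div]

/-- Lagrange interpolation of the monic polynomial `∏ (X - λ_l)` of degree `k` at the `k + 1`
nodes `1, γ_1, …, γ_k`: its leading coefficient `1` is the sum of the Lagrange terms, the term
at the node `1` is `1 / π*_k(0)` and the term at `γ_i` is `-π*_k(i) / π*_k(0)`. -/
lemma pistar_apply_zero_add_sum {k : ℕ} (hγ : Set.InjOn γ (Icc 1 k))
    (hγ1 : ∀ j ∈ Icc 1 k, γ j ≠ 1) (hlam : ∀ l ∈ Icc 1 k, lam l ≠ 1) :
    pistar γ lam k 0 + ∑ i ∈ Icc 1 k, pistar γ lam k i = 1 := by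
  set v := Function.update γ 0 1
  set s := insert 0 (Icc 1 k)
  have hv0 : v 0 = 1 := Function.update_self ..
  have hv : Set.EqOn γ v (Icc 1 k) := fun i hi =>
    (Function.update_of_ne (by simp only [coe_Icc, Set.mem_Icc] at hi; omega) ..).symm
  have hvprod : ∀ x : ℝ, ∀ t ⊆ Icc 1 k, ∏ j ∈ t, (x - v j) = ∏ j ∈ t, (x - γ j) :=
    fun x t ht => prod_congr rfl fun j hj => by rw [hv (ht hj)]
  have hinj : Set.InjOn v s := by
    rw [coe_insert, Set.injOn_insert (by simp), hv0]
    exact ⟨hγ.congr hv, fun ⟨j, hj, hvj⟩ => hγ1 j hj ((hv hj).trans hvj)⟩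
  have hcard : #s = (Lagrange.nodal (Icc 1 k) lam).degree + 1 := by
    rw [Lagrange.degree_nodal, card_insert_of_notMem (by simp)]
    norm_cast
  have hR : pistar γ lam k 0 ≠ 0 := prod_ne_zero_iff.mpr fun j hj =>
    div_ne_zero (sub_ne_zero.mpr (hγ1 j hj).symm) (sub_ne_zero.mpr (hlam j hj).symm)
  have hterm0 : (∏ l ∈ Icc 1 k, (v 0 - lam l)) / ∏ j ∈ Icc 1 k, (v 0 - v j)
      = (pistar γ lam k 0)⁻¹ := by
    rw [hv0, hvprod _ _ subset_rfl, inv_pistar_apply_zero]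
  have hterm : ∀ i ∈ Icc 1 k, (∏ l ∈ Icc 1 k, (v i - lam l)) / ∏ j ∈ s.erase i, (v i - v j)
      = -pistar γ lam k i / pistar γ lam k 0 := by
    intro i hi
    have hγi : γ i - 1 ≠ 0 := sub_ne_zero.mpr (hγ1 i hi)
    have hB : ∏ l ∈ (Icc 1 k).erase i, (γ i - γ l) ≠ 0 := prod_ne_zero_iff.mpr fun l hl =>
      sub_ne_zero.mpr fun h => ne_of_mem_erase hl (hγ (mem_of_mem_erase hl) hi h.symm)
    rw [erase_insert_of_ne (by rw [mem_Icc] at hi; omega), prod_insert (by simp), hv0,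
      hvprod _ _ (erase_subset _ _), ← hv hi, div_eq_div_iff (mul_ne_zero hγi hB) hR]
    rw [mem_Icc] at hi
    have key := one_sub_gamma_mul_pistar (γ := γ) hlam hi.1 hi.2
    rw [eq_div_iff hB] at key
    linear_combination -key
  have hsum := Lagrange.leadingCoeff_eq_sum hinj hcard
  simp only [Lagrange.eval_nodal] at hsum
  rw [Lagrange.nodal_monic.leadingCoeff, sum_insert (by simp), erase_insert (by simp), hterm0,
    sum_congr rfl hterm, ← sum_div, sum_neg_distrib] at hsum
  field_simp at hsum
  linarith

lemma nuvec_apply_zero (i : ℕ) : nuvec γ lam i 0 = 0 := by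
  rw [nuvec, if_neg (by omega)]

lemma nuvec_of_lt {i j : ℕ} (h : i < j) : nuvec γ lam i j = 0 := by
  rw [nuvec, if_neg (by omega)]

lemma nuvec_succ_of_pos_of_le {k j : ℕ} (hj : 1 ≤ j) (hjk : j ≤ k)
    (hf : 1 - γ (k + 1) - rho γ lam (k + 1) * (1 - γ j) ≠ 0) :
    nuvec γ lam (k + 1) j = (1 - γ (k + 1)) * pistar γ lam k j / (γ j - γ (k + 1)) := by
  rw [nuvec, if_pos ⟨hj, by omega⟩, pistar_succ_of_pos_of_le hj hjk]
  field_simp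

lemma one_sub_rho_mul_nuvec_self {i : ℕ} (hi : 1 ≤ i) (hγ : γ i ≠ 1) :
    (1 - rho γ lam i) * nuvec γ lam i i = pistar γ lam i i := by
  by_cases hρ : 1 - rho γ lam i = 0
  · rw [pistar_of_pos_of_le hi le_rfl, hρ, zero_mul, zero_mul]
  · have : 1 - γ i ≠ 0 := sub_ne_zero.mpr hγ.symm
    rw [nuvec, if_pos ⟨hi, le_rfl⟩]
    field_simp

lemma vecMul_Pstar {r : ℕ} (f : ℕ → ℝ) (hf : f 0 = 0) :
    (fun j : Fin (r + 1) => f j) ᵥ* Pstar r γ lam = fun j : Fin (r + 1) =>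
      γ j * f j + if (j : ℕ) = 0 then ∑ m ∈ range (r + 1), (1 - γ m) * f m else 0 := by
  funext j
  have hterm : ∀ m : Fin (r + 1), f m * Pstar r γ lam m j
      = (if j = m then γ j * f j else 0) + if (j : ℕ) = 0 then (1 - γ m) * f m else 0 := by
    intro m
    by_cases hm : (m : ℕ) = 0
    · have hjm : j = m → f j = 0 := fun h => h ▸ hm ▸ hf
      rw [hm, hf]
      split_ifs <;> simp_all
    · simp only [Pstar, of_apply, if_neg hm]
      split_ifs <;> simp_all [mul_comm]
  simp only [vecMul, dotProduct, hterm, sum_add_distrib, sum_ite_eq, mem_univ, if_true]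
  rw [Fin.sum_univ_eq_sum_range (fun m => if (j : ℕ) = 0 then (1 - γ m) * f m else 0),
    sum_ite_irrel]
  simp

end Algebra

section Interlacing

variable {r : ℕ} {γ lam : ℕ → ℝ}
  (hinter : ∀ i : ℕ, 1 ≤ i → i ≤ r → lam (i - 1) > γ i ∧ γ i > lam i)
include hinter

lemma gamma_lt_lam_of_lt {l j : ℕ} (hlj : l < j) (hj : j ≤ r) : γ j < lam l := by
  induction j, hlj using Nat.le_induction with
  | base => simpa using (hinter (l + 1) (by omega) hj).1
  | succ j hlj ih =>
    have h1 := (hinter (j + 1) (by omega) hj).1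
    have h2 := (hinter j (by omega) (by omega)).2
    simp only [Nat.add_sub_cancel] at h1
    linarith [ih (by omega)]

lemma gamma_lt_gamma_of_lt {l j : ℕ} (hl : 1 ≤ l) (hlj : l < j) (hj : j ≤ r) : γ j < γ l :=
  (gamma_lt_lam_of_lt hinter hlj hj).trans (hinter l hl (by omega)).2

lemma lam_lt_gamma_of_le {j l : ℕ} (hj : 1 ≤ j) (hjl : j ≤ l) (hl : l ≤ r) : lam l < γ j := by
  rcases hjl.eq_or_lt with rfl | hlt
  · exact (hinter j hj hl).2
  · exact (hinter l (by omega) hl).2.trans (gamma_lt_gamma_of_lt hinter hj hlt hl)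

lemma strictAntiOn_gamma : StrictAntiOn γ (Icc 1 r) := fun l hl j hj hlj => by
  simp only [coe_Icc, Set.mem_Icc] at hl hj
  exact gamma_lt_gamma_of_lt hinter hl.1 hlj hj.2

variable (hlam0 : lam 0 = 1)
include hlam0

lemma gamma_lt_one {j : ℕ} (hj : 1 ≤ j) (hjr : j ≤ r) : γ j < 1 :=
  hlam0 ▸ gamma_lt_lam_of_lt hinter (by omega) hjr

lemma lam_lt_one {j : ℕ} (hj : 1 ≤ j) (hjr : j ≤ r) : lam j < 1 :=
  (hinter j hj hjr).2.trans (gamma_lt_one hinter hlam0 hj hjr)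

lemma rho_pos {j : ℕ} (hj : 1 ≤ j) (hjr : j ≤ r) : 0 < rho γ lam j :=
  div_pos (sub_pos.mpr (gamma_lt_one hinter hlam0 hj hjr))
    (sub_pos.mpr (lam_lt_one hinter hlam0 hj hjr))

lemma rho_lt_one {j : ℕ} (hj : 1 ≤ j) (hjr : j ≤ r) : rho γ lam j < 1 :=
  (div_lt_one (sub_pos.mpr (lam_lt_one hinter hlam0 hj hjr))).mpr
    (by linarith [(hinter j hj hjr).2])

lemma one_sub_sub_rho_mul_pos {j l : ℕ} (hj : 1 ≤ j) (hjl : j ≤ l) (hl : l ≤ r) :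
    0 < 1 - γ l - rho γ lam l * (1 - γ j) := by
  rw [one_sub_sub_rho_mul (lam_lt_one hinter hlam0 (by omega) hl).ne]
  exact mul_pos (rho_pos hinter hlam0 (by omega) hl)
    (sub_pos.mpr (lam_lt_gamma_of_le hinter hj hjl hl))

lemma pistar_factor_pos {j l : ℕ} (hj : 1 ≤ j) (hjr : j ≤ r) (hl : 1 ≤ l) (hlr : l ≤ r)
    (hlj : l ≠ j) : 0 < (1 - γ l - rho γ lam l * (1 - γ j)) / (γ j - γ l) := by
  rcases hlj.lt_or_gt with hlt | hgt
  · rw [one_sub_sub_rho_mul (lam_lt_one hinter hlam0 hl hlr).ne]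
    exact div_pos_of_neg_of_neg
      (mul_neg_of_pos_of_neg (rho_pos hinter hlam0 hl hlr)
        (sub_neg.mpr (gamma_lt_lam_of_lt hinter hlt hjr)))
      (sub_neg.mpr (gamma_lt_gamma_of_lt hinter hl hlt hjr))
  · exact div_pos (one_sub_sub_rho_mul_pos hinter hlam0 hj hgt.le hlr)
      (sub_pos.mpr (gamma_lt_gamma_of_lt hinter hj hgt hlr))

lemma pistar_pos {k j : ℕ} (hj : 1 ≤ j) (hjk : j ≤ k) (hk : k ≤ r) : 0 < pistar γ lam k j := by
  rw [pistar_of_pos_of_le hj hjk]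
  refine mul_pos (sub_pos.mpr (rho_lt_one hinter hlam0 hj (by omega))) (prod_pos fun l hl => ?_)
  obtain ⟨hlj, hl⟩ := mem_erase.mp hl
  rw [mem_Icc] at hl
  exact pistar_factor_pos hinter hlam0 hj (by omega) hl.1 (by omega) hlj

lemma nuvec_nonneg {i : ℕ} (hi : i ≤ r) (j : ℕ) : 0 ≤ nuvec γ lam i j := by
  rw [nuvec]
  split_ifs with hj
  · exact div_nonneg
      (mul_nonneg (sub_pos.mpr (gamma_lt_one hinter hlam0 (by omega) hi)).le
        (pistar_pos hinter hlam0 hj.1 hj.2 hi).le)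
      (one_sub_sub_rho_mul_pos hinter hlam0 hj.1 hj.2 hi).le
  · exact le_rfl

lemma sum_pistar {k : ℕ} (hk : k ≤ r) : ∑ j ∈ range (r + 1), pistar γ lam k j = 1 := by
  rw [← pistar_apply_zero_add_sum
    ((strictAntiOn_gamma hinter).injOn.mono (coe_subset.mpr (Icc_subset_Icc_right hk)))
    (fun j hj => (gamma_lt_one hinter hlam0 (mem_Icc.mp hj).1 ((mem_Icc.mp hj).2.trans hk)).ne)
    (fun j hj => (lam_lt_one hinter hlam0 (mem_Icc.mp hj).1 ((mem_Icc.mp hj).2.trans hk)).ne),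
    ← sum_insert (by simp)]
  refine (sum_subset (fun j hj => ?_) fun j _ hj => pistar_of_lt ?_).symm
  · simp only [mem_insert, mem_Icc] at hj
    simp only [mem_range]
    omega
  · simp only [mem_insert, mem_Icc] at hj
    omega

lemma sub_mul_nuvec {k j : ℕ} (hk : k + 1 ≤ r) (hj : j ≠ 0) :
    (γ j - γ (k + 1)) * nuvec γ lam (k + 1) j = (1 - γ (k + 1)) * pistar γ lam k j := by
  rcases lt_trichotomy j (k + 1) with hlt | rfl | hgt
  · have hd : γ j - γ (k + 1) ≠ 0 :=
      (sub_pos.mpr (gamma_lt_gamma_of_lt hinter (by omega) hlt hk)).ne'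
    rw [nuvec_succ_of_pos_of_le (by omega) (by omega)
      (one_sub_sub_rho_mul_pos hinter hlam0 (by omega) hlt.le hk).ne']
    field_simp
  · rw [sub_self, zero_mul, pistar_of_lt (by omega), mul_zero]
  · rw [nuvec_of_lt hgt, pistar_of_lt (by omega), mul_zero, mul_zero]

lemma pistar_succ_eq {k : ℕ} (hk : k + 1 ≤ r) (j : ℕ) :
    pistar γ lam (k + 1) j = rho γ lam (k + 1) * pistar γ lam k j +
      (1 - rho γ lam (k + 1)) * nuvec γ lam (k + 1) j := by
  rcases Nat.eq_zero_or_pos j with rfl | hj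
  · rw [pistar_succ_apply_zero, nuvec_apply_zero, mul_zero, add_zero]
  rcases lt_trichotomy j (k + 1) with hlt | rfl | hgt
  · have hd : γ j - γ (k + 1) ≠ 0 :=
      (sub_pos.mpr (gamma_lt_gamma_of_lt hinter (by omega) hlt hk)).ne'
    have hf := (one_sub_sub_rho_mul_pos hinter hlam0 hj hlt.le hk).ne'
    rw [pistar_succ_of_pos_of_le hj (by omega), nuvec_succ_of_pos_of_le hj (by omega) hf]
    field_simp
    ring
  · rw [pistar_of_lt (k := k) (lt_add_one k), mul_zero, zero_add,
      one_sub_rho_mul_nuvec_self hj (gamma_lt_one hinter hlam0 hj hk).ne]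
  · rw [pistar_of_lt hgt, pistar_of_lt (by omega), nuvec_of_lt hgt]
    ring

lemma sum_nuvec {k : ℕ} (hk : k + 1 ≤ r) : ∑ j ∈ range (r + 1), nuvec γ lam (k + 1) j = 1 := by
  have h := sum_congr rfl fun j (_ : j ∈ range (r + 1)) => pistar_succ_eq hinter hlam0 hk j
  rw [sum_add_distrib, ← mul_sum, ← mul_sum, sum_pistar hinter hlam0 hk,
    sum_pistar hinter hlam0 (by omega)] at h
  have hρ : 1 - rho γ lam (k + 1) ≠ 0 := (sub_pos.mpr (rho_lt_one hinter hlam0 (by omega) hk)).ne'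
  exact mul_left_cancel₀ hρ (by linear_combination -h)

lemma sum_one_sub_gamma_mul_nuvec {k : ℕ} (hk : k + 1 ≤ r) :
    ∑ m ∈ range (r + 1), (1 - γ m) * nuvec γ lam (k + 1) m
      = (1 - γ (k + 1)) * pistar γ lam k 0 := by
  have hν := sum_nuvec hinter hlam0 hk
  have hπ := sum_pistar hinter hlam0 (k := k) (by omega)
  have hterm : ∀ m, (1 - γ (m + 1)) * nuvec γ lam (k + 1) (m + 1)
      = (1 - γ (k + 1)) * (nuvec γ lam (k + 1) (m + 1) - pistar γ lam k (m + 1)) :=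
    fun m => by linear_combination -sub_mul_nuvec hinter hlam0 hk m.succ_ne_zero
  rw [sum_range_succ'] at hν hπ ⊢
  simp only [hterm, ← mul_sum, sum_sub_distrib, nuvec_apply_zero] at hν ⊢
  linear_combination (1 - γ (k + 1)) * hν - (1 - γ (k + 1)) * hπ

end Interlacing

theorem stmt9_general (r : ℕ) (γ lam : ℕ → ℝ)
    (hlam0 : lam 0 = 1)
    (hinter : ∀ i : ℕ, 1 ≤ i → i ≤ r → lam (i - 1) > γ i ∧ γ i > lam i) :
    ∀ i : ℕ, 1 ≤ i → i ≤ r →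
      (∀ j : ℕ, 0 ≤ nuvec γ lam i j) ∧
      (∑ j ∈ Finset.range (r + 1), nuvec γ lam i j = 1) ∧
      (∀ j : ℕ,
        pistar γ lam i j
          = rho γ lam i * pistar γ lam (i - 1) j + (1 - rho γ lam i) * nuvec γ lam i j) ∧
      ((fun j : Fin (r + 1) => nuvec γ lam i j.val) ᵥ* Pstar r γ lam
        = fun j : Fin (r + 1) =>
            γ i * nuvec γ lam i j.val + (1 - γ i) * pistar γ lam (i - 1) j.val) := by
  intro i hi hir
  obtain ⟨k, rfl⟩ : ∃ k, i = k + 1 := ⟨i - 1, by omega⟩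
  rw [Nat.add_sub_cancel]
  refine ⟨nuvec_nonneg hinter hlam0 hir, sum_nuvec hinter hlam0 hir,
    pistar_succ_eq hinter hlam0 hir, ?_⟩
  rw [vecMul_Pstar _ (nuvec_apply_zero _)]
  funext j
  split_ifs with hj
  · rw [sum_one_sub_gamma_mul_nuvec hinter hlam0 hir, hj, nuvec_apply_zero]
    ring
  · linear_combination sub_mul_nuvec hinter hlam0 hir hj

/-- the "spoke-breaking" theorem: for each `i = 1,…,r`, `ν_i` is a
probability distribution on `{0,…,r}`, `π*_i = ρ_i π*_{i−1} + (1−ρ_i) ν_i`, and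
`ν_i P* = γ_i ν_i + (1−γ_i) π*_{i−1}`. -/
theorem stmt9 (r : ℕ) (hr : 1 ≤ r) (γ lam : ℕ → ℝ)
    (hlam0 : lam 0 = 1)
    (hinter : ∀ i : ℕ, 1 ≤ i → i ≤ r → lam (i - 1) > γ i ∧ γ i > lam i)
    (hlamr : 0 ≤ lam r) :
    ∀ i : ℕ, 1 ≤ i → i ≤ r →
      (∀ j : ℕ, 0 ≤ nuvec γ lam i j) ∧
      (∑ j ∈ Finset.range (r + 1), nuvec γ lam i j = 1) ∧
      (∀ j : ℕ,
        pistar γ lam i j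
          = rho γ lam i * pistar γ lam (i - 1) j + (1 - rho γ lam i) * nuvec γ lam i j) ∧
      ((fun j : Fin (r + 1) => nuvec γ lam i j.val) ᵥ* Pstar r γ lam
        = fun j : Fin (r + 1) =>
            γ i * nuvec γ lam i j.val + (1 - γ i) * pistar γ lam (i - 1) j.val) :=
  stmt9_general r γ lam hlam0 hinter
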